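/- For each t ∈ {0,1,…,T−1} and each k ∈ ℕ, there exists a control limit δ ∈ ℕ with 0 < δ ≤ ξ such that for every x ∈ ℕ with x < ξ, preventive replacement is optimal at (x,k) — i.e. c_p + E_{(Z,K)}[Ṽ_{t+1}(Z, k+Z+K)] ≤ E_{(Z,K)}[Ṽ_{t+1}(x+Z, k+Z+K)] — if and only if x ≥ δ. -/

import Mathlib

open Filter

/-- Negative Binomial pmf with real shape `r` and success probability `p`:
`NB(r,p)(z) = Γ(z+r)/(Γ(r)·z!)·p^r·(1−p)^z` for `r > 0`, and `NB(0,p)` is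
the point mass at `0`. -/
noncomputable def NB (r p : ℝ) (z : ℕ) : ℝ :=
  if r = 0 then (if z = 0 then (1 : ℝ) else 0)
  else Real.Gamma ((z : ℝ) + r) / (Real.Gamma r * (Nat.factorial z : ℝ)) * p ^ r * (1 - p) ^ z

/-- `p_t = (β0 + N·t)/(β0 + N·t + 1)`. -/
noncomputable def pt (β0 : ℝ) (N t : ℕ) : ℝ :=
  (β0 + (N : ℝ) * (t : ℝ)) / (β0 + (N : ℝ) * (t : ℝ) + 1)

/-- Expectation `E_{(Z,K)}[f(Z,K)]` with `Z ~ NB(α0+k, p_t)` and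
`K ~ NB((N−1)(α0+k), p_t)` independent. -/
noncomputable def EZK (α0 β0 : ℝ) (N t k : ℕ) (f : ℕ → ℕ → ℝ) : ℝ :=
  ∑' z : ℕ, ∑' κ : ℕ,
    NB (α0 + (k : ℝ)) (pt β0 N t) z * NB (((N : ℝ) - 1) * (α0 + (k : ℝ))) (pt β0 N t) κ * f z κ

/-!
For `r > 0`, `NB(r,p)(z) = p^r · C(r+z-1, z) · (1-p)^z`, so the binomial series
`∑ C(r+z-1, z) qᶻ = (1-q)^(-r)` shows that the negative binomial weights sum to one, and
`E_{(Z,K)}` is a monotone average of bounded functions. Backward induction then shows that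
every `Ṽ_t(·, k)` is bounded and nondecreasing in the degradation level `x` (at `x = ξ` the
value jumps from at most `c_p + E[…]` to `c_u + E[…]`). Hence the set of `x` at which
preventive replacement is optimal is upward closed, and it misses `0` because `c_p > 0`;
its least element, or `ξ` if it has none below `ξ`, is the control limit.
-/

open Set

lemma Real.Gamma_add_nat_div_Gamma {r : ℝ} (hr : 0 < r) (n : ℕ) :
    Real.Gamma (n + r) / Real.Gamma r = (ascPochhammer ℝ n).eval r := by
  induction n with
  | zero => simp [(Real.Gamma_pos_of_pos hr).ne']
  | succ n ih =>
    have hnr : 0 < n + r := by positivity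
    rw [Nat.cast_succ, add_right_comm, Real.Gamma_add_one hnr.ne', mul_div_assoc, ih,
      ascPochhammer_succ_eval]
    ring

lemma Ring.choose_add_sub_one_eq_ascPochhammer (r : ℝ) (n : ℕ) :
    Ring.choose (r + n - 1) n = (ascPochhammer ℝ n).eval r / n.factorial := by
  rw [Ring.choose_eq_smul, Polynomial.descPochhammer_smeval_eq_ascPochhammer,
    Polynomial.ascPochhammer_smeval_eq_eval, smul_eq_mul, div_eq_inv_mul]
  congr 2
  ring

lemma NB_eq_choose {r p : ℝ} (hr : 0 < r) (z : ℕ) :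
    NB r p z = p ^ r * Ring.choose (r + z - 1) z * (1 - p) ^ z := by
  rw [NB, if_neg hr.ne', Ring.choose_add_sub_one_eq_ascPochhammer, ← Real.Gamma_add_nat_div_Gamma hr]
  field_simp

lemma NB_nonneg {r p : ℝ} (hr : 0 ≤ r) (hp : p ∈ Ioo 0 1) (z : ℕ) : 0 ≤ NB r p z := by
  rcases hr.eq_or_lt with rfl | hr
  · unfold NB; split_ifs <;> norm_num
  · have := hp.1
    have := Real.Gamma_pos_of_pos hr
    have : 0 < Real.Gamma (z + r) := Real.Gamma_pos_of_pos (by positivity)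
    have : 0 ≤ 1 - p := by linarith [hp.2]
    rw [NB, if_neg hr.ne']
    positivity

lemma hasSum_NB {r p : ℝ} (hr : 0 ≤ r) (hp : p ∈ Ioo 0 1) : HasSum (NB r p) 1 := by
  rcases hr.eq_or_lt with rfl | hr
  · convert hasSum_ite_eq 0 (1 : ℝ) using 2 with z
    simp [NB]
  · have hq : 1 - p ∈ Metric.eball (0 : ℝ) 1 := by
      simp [Metric.mem_eball, edist_dist, abs_of_pos (sub_pos.2 hp.2), hp.1]
    have h := ((Real.one_div_one_sub_rpow_hasFPowerSeriesOnBall_zero r).hasSum hq).mul_left (p ^ r)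
    simp only [FormalMultilinearSeries.ofScalars_apply_eq, smul_eq_mul, zero_add, sub_sub_cancel,
      mul_one_div_cancel (Real.rpow_pos_of_pos hp.1 r).ne'] at h
    exact h.congr_fun fun z => by rw [NB_eq_choose hr, mul_assoc]

section ProbabilityWeights

variable {w g g' : ℕ → ℝ} {M : ℝ}

lemma summable_mul_of_mem_Icc (hw : ∀ n, 0 ≤ w n) (hws : Summable w) (hg : ∀ n, g n ∈ Icc 0 M) :
    Summable fun n => w n * g n :=
  .of_nonneg_of_le (fun n => mul_nonneg (hw n) (hg n).1)
    (fun n => mul_le_mul_of_nonneg_left (hg n).2 (hw n)) (hws.mul_right M)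

lemma tsum_mul_mem_Icc (hw : ∀ n, 0 ≤ w n) (hw1 : HasSum w 1) (hg : ∀ n, g n ∈ Icc 0 M) :
    ∑' n, w n * g n ∈ Icc 0 M := by
  refine ⟨tsum_nonneg fun n => mul_nonneg (hw n) (hg n).1, ?_⟩
  calc ∑' n, w n * g n ≤ ∑' n, w n * M :=
        (summable_mul_of_mem_Icc hw hw1.summable hg).tsum_le_tsum
          (fun n => mul_le_mul_of_nonneg_left (hg n).2 (hw n)) (hw1.summable.mul_right M)
    _ = M := by rw [tsum_mul_right, hw1.tsum_eq, one_mul]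

lemma tsum_mul_le_tsum_mul (hw : ∀ n, 0 ≤ w n) (hws : Summable w) (hg : ∀ n, g n ∈ Icc 0 M)
    (hg' : ∀ n, g' n ∈ Icc 0 M) (h : ∀ n, g n ≤ g' n) :
    ∑' n, w n * g n ≤ ∑' n, w n * g' n :=
  (summable_mul_of_mem_Icc hw hws hg).tsum_le_tsum (fun n => mul_le_mul_of_nonneg_left (h n) (hw n))
    (summable_mul_of_mem_Icc hw hws hg')

end ProbabilityWeights

lemma pt_mem_Ioo {β0 : ℝ} (hβ0 : 0 < β0) (N t : ℕ) : pt β0 N t ∈ Ioo 0 1 := by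
  have h : 0 < β0 + (N : ℝ) * t := by positivity
  exact ⟨div_pos h (by linarith), (div_lt_one (by linarith)).2 (by linarith)⟩

section Expectation

variable {α0 β0 : ℝ} {N : ℕ} {M : ℝ}

lemma EZK_eq_tsum_mul_tsum (t k : ℕ) (f : ℕ → ℕ → ℝ) :
    EZK α0 β0 N t k f = ∑' z, NB (α0 + k) (pt β0 N t) z *
      ∑' κ, NB ((N - 1) * (α0 + k)) (pt β0 N t) κ * f z κ := by
  simp only [EZK, mul_assoc, tsum_mul_left]

lemma EZK_shapes_nonneg (hα0 : 0 ≤ α0) (hN : 1 ≤ N) (k : ℕ) :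
    0 ≤ α0 + k ∧ 0 ≤ ((N : ℝ) - 1) * (α0 + k) :=
  have h : 0 ≤ α0 + k := by positivity
  ⟨h, mul_nonneg (sub_nonneg.2 (by exact_mod_cast hN)) h⟩

lemma EZK_mem_Icc (hα0 : 0 ≤ α0) (hβ0 : 0 < β0) (hN : 1 ≤ N) (t k : ℕ) {f : ℕ → ℕ → ℝ}
    (hf : ∀ z κ, f z κ ∈ Icc 0 M) : EZK α0 β0 N t k f ∈ Icc 0 M := by
  obtain ⟨h₁, h₂⟩ := EZK_shapes_nonneg hα0 hN k
  have hp := pt_mem_Ioo hβ0 N t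
  rw [EZK_eq_tsum_mul_tsum]
  exact tsum_mul_mem_Icc (NB_nonneg h₁ hp) (hasSum_NB h₁ hp) fun z =>
    tsum_mul_mem_Icc (NB_nonneg h₂ hp) (hasSum_NB h₂ hp) (hf z)

lemma EZK_mono (hα0 : 0 ≤ α0) (hβ0 : 0 < β0) (hN : 1 ≤ N) (t k : ℕ) {f g : ℕ → ℕ → ℝ}
    (hf : ∀ z κ, f z κ ∈ Icc 0 M) (hg : ∀ z κ, g z κ ∈ Icc 0 M) (hfg : ∀ z κ, f z κ ≤ g z κ) :
    EZK α0 β0 N t k f ≤ EZK α0 β0 N t k g := by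
  obtain ⟨h₁, h₂⟩ := EZK_shapes_nonneg hα0 hN k
  have hp := pt_mem_Ioo hβ0 N t
  rw [EZK_eq_tsum_mul_tsum, EZK_eq_tsum_mul_tsum]
  exact tsum_mul_le_tsum_mul (NB_nonneg h₁ hp) (hasSum_NB h₁ hp).summable
    (fun z => tsum_mul_mem_Icc (NB_nonneg h₂ hp) (hasSum_NB h₂ hp) (hf z))
    (fun z => tsum_mul_mem_Icc (NB_nonneg h₂ hp) (hasSum_NB h₂ hp) (hg z))
    fun z => tsum_mul_le_tsum_mul (NB_nonneg h₂ hp) (hasSum_NB h₂ hp).summable (hf z) (hg z) (hfg z)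

lemma EZK_shift_monotone (hα0 : 0 ≤ α0) (hβ0 : 0 < β0) (hN : 1 ≤ N) (t k : ℕ)
    {W : ℕ → ℕ → ℝ} (hW : ∀ x k, W x k ∈ Icc 0 M) (hWm : ∀ k, Monotone fun x => W x k) :
    Monotone fun x => EZK α0 β0 N t k fun z κ => W (x + z) (k + z + κ) :=
  fun _ _ hxy => EZK_mono hα0 hβ0 hN t k (fun _ _ => hW _ _) (fun _ _ => hW _ _)
    fun _ _ => hWm _ (Nat.add_le_add_right hxy _)

end Expectation

structure IsValueFunction (α0 β0 : ℝ) (N T ξ : ℕ) (cp cu : ℝ) (V : ℕ → ℕ → ℕ → ℝ) : Prop where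
  terminal : ∀ x k, V T x k = if ξ ≤ x then cu else 0
  failed : ∀ t < T, ∀ x k, ξ ≤ x →
    V t x k = cu + EZK α0 β0 N t k (fun z κ => V (t + 1) z (k + z + κ))
  working : ∀ t < T, ∀ x k, x < ξ →
    V t x k = min (cp + EZK α0 β0 N t k (fun z κ => V (t + 1) z (k + z + κ)))
      (EZK α0 β0 N t k (fun z κ => V (t + 1) (x + z) (k + z + κ)))

namespace IsValueFunction

variable {α0 β0 : ℝ} {N T ξ : ℕ} {cp cu : ℝ} {V : ℕ → ℕ → ℕ → ℝ}

lemma exists_bound (hV : IsValueFunction α0 β0 N T ξ cp cu V) (hα0 : 0 ≤ α0) (hβ0 : 0 < β0)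
    (hN : 1 ≤ N) (hcp : 0 ≤ cp) (hcpcu : cp ≤ cu) {t : ℕ} (ht : t ≤ T) :
    ∃ M, ∀ x k, V t x k ∈ Icc 0 M := by
  induction ht using Nat.decreasingInduction with
  | self =>
    refine ⟨cu, fun x k => ?_⟩
    rw [hV.terminal]
    split_ifs <;> constructor <;> linarith
  | of_succ s hs ih =>
    obtain ⟨M, hM⟩ := ih
    refine ⟨cu + M, fun x k => ?_⟩
    have hE := EZK_mem_Icc hα0 hβ0 hN s k fun z κ => hM z (k + z + κ)
    rcases le_or_gt ξ x with hx | hx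
    · rw [hV.failed s hs x k hx]
      constructor <;> linarith [hE.1, hE.2]
    · have hG := EZK_mem_Icc hα0 hβ0 hN s k fun z κ => hM (x + z) (k + z + κ)
      rw [hV.working s hs x k hx]
      exact ⟨le_min (by linarith [hE.1]) hG.1, (min_le_right _ _).trans (by linarith [hG.2])⟩

lemma monotone (hV : IsValueFunction α0 β0 N T ξ cp cu V) (hα0 : 0 ≤ α0) (hβ0 : 0 < β0)
    (hN : 1 ≤ N) (hcp : 0 ≤ cp) (hcpcu : cp ≤ cu) {t : ℕ} (ht : t ≤ T) (k : ℕ) :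
    Monotone fun x => V t x k := by
  induction ht using Nat.decreasingInduction generalizing k with
  | self =>
    intro x y hxy
    simp only [hV.terminal]
    split_ifs <;> first | rfl | omega | linarith
  | of_succ s hs ih =>
    intro x y hxy
    show V s x k ≤ V s y k
    obtain ⟨M, hM⟩ := hV.exists_bound hα0 hβ0 hN hcp hcpcu hs
    rcases lt_or_ge y ξ with hy | hy
    · rw [hV.working s hs x k (hxy.trans_lt hy), hV.working s hs y k hy]
      exact min_le_min_left _ (EZK_shift_monotone hα0 hβ0 hN s k hM ih hxy)
    rcases lt_or_ge x ξ with hx | hx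
    · rw [hV.working s hs x k hx, hV.failed s hs y k hy]
      exact (min_le_left _ _).trans (by linarith)
    · rw [hV.failed s hs x k hx, hV.failed s hs y k hy]

end IsValueFunction

lemma exists_threshold_of_monotone {P : ℕ → Prop} (hP : Monotone P) (h0 : ¬ P 0) {ξ : ℕ}
    (hξ : 0 < ξ) : ∃ δ, 0 < δ ∧ δ ≤ ξ ∧ ∀ x < ξ, (P x ↔ δ ≤ x) := by
  classical
  have hQ : ∃ x, P x ∨ ξ ≤ x := ⟨ξ, .inr le_rfl⟩
  refine ⟨Nat.find hQ, (Nat.find_pos hQ).2 fun h => h.elim h0 (by omega),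
    Nat.find_min' hQ (.inr le_rfl), fun x hx => ?_⟩
  rw [Nat.find_le_iff]
  constructor
  · exact fun hx' => ⟨x, le_rfl, .inl hx'⟩
  · rintro ⟨y, hyx, hy | hy⟩
    · exact hP hyx hy
    · omega

theorem control_limit_exists_general
    (α0 β0 : ℝ) (hα0 : 0 < α0) (hβ0 : 0 < β0)
    (N T : ℕ) (hN : 1 ≤ N)
    (ξ : ℕ) (hξ : 1 ≤ ξ)
    (cp cu : ℝ) (hcp : 0 < cp) (hcpcu : cp < cu)
    (V : ℕ → ℕ → ℕ → ℝ)
    (hVT : ∀ x k, V T x k = if ξ ≤ x then cu else 0)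
    (hVfail : ∀ t, t < T → ∀ x k, ξ ≤ x →
      V t x k = cu + EZK α0 β0 N t k (fun z κ => V (t + 1) z (k + z + κ)))
    (hVop : ∀ t, t < T → ∀ x k, x < ξ →
      V t x k =
        min (cp + EZK α0 β0 N t k (fun z κ => V (t + 1) z (k + z + κ)))
          (EZK α0 β0 N t k (fun z κ => V (t + 1) (x + z) (k + z + κ)))) :
    ∀ t, t < T → ∀ k : ℕ, ∃ δ : ℕ, 0 < δ ∧ δ ≤ ξ ∧
      ∀ x : ℕ, x < ξ →
        ((cp + EZK α0 β0 N t k (fun z κ => V (t + 1) z (k + z + κ)) ≤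
            EZK α0 β0 N t k (fun z κ => V (t + 1) (x + z) (k + z + κ))) ↔ δ ≤ x) := by
  intro t ht k
  have hV : IsValueFunction α0 β0 N T ξ cp cu V := ⟨hVT, hVfail, hVop⟩
  obtain ⟨M, hM⟩ := hV.exists_bound hα0.le hβ0 hN hcp.le hcpcu.le ht
  have hG := EZK_shift_monotone hα0.le hβ0 hN t k hM (hV.monotone hα0.le hβ0 hN hcp.le hcpcu.le ht)
  refine exists_threshold_of_monotone (fun x y hxy h => h.trans (hG hxy)) ?_ hξ
  simpa using hcp

/-- Existence of a control limit `δ` with `0 < δ ≤ ξ`: preventive replacement is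
optimal at `(x,k)` with `x < ξ` iff `δ ≤ x`. -/
theorem control_limit_exists
    (α0 β0 : ℝ) (hα0 : 0 < α0) (hβ0 : 0 < β0)
    (N T : ℕ) (hN : 1 ≤ N) (hT : 1 ≤ T)
    (ξ : ℕ) (hξ : 1 ≤ ξ)
    (cp cu : ℝ) (hcp : 0 < cp) (hcpcu : cp < cu)
    (V : ℕ → ℕ → ℕ → ℝ)
    (hVT : ∀ x k, V T x k = if ξ ≤ x then cu else 0)
    (hVfail : ∀ t, t < T → ∀ x k, ξ ≤ x →
      V t x k = cu + EZK α0 β0 N t k (fun z κ => V (t + 1) z (k + z + κ)))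
    (hVop : ∀ t, t < T → ∀ x k, x < ξ →
      V t x k =
        min (cp + EZK α0 β0 N t k (fun z κ => V (t + 1) z (k + z + κ)))
          (EZK α0 β0 N t k (fun z κ => V (t + 1) (x + z) (k + z + κ)))) :
    ∀ t, t < T → ∀ k : ℕ, ∃ δ : ℕ, 0 < δ ∧ δ ≤ ξ ∧
      ∀ x : ℕ, x < ξ →
        ((cp + EZK α0 β0 N t k (fun z κ => V (t + 1) z (k + z + κ)) ≤
            EZK α0 β0 N t k (fun z κ => V (t + 1) (x + z) (k + z + κ))) ↔ δ ≤ x) :=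
  control_limit_exists_general α0 β0 hα0 hβ0 N T hN ξ hξ cp cu hcp hcpcu V hVT hVfail hVop
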